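/- arXiv:0704.3939 — 5 statements merged into one kernel-verified Lean document; each statement's English description precedes it below -/
import Mathlib

section
/- Let ρ = e^{2πi/3}, H = diag(1,1,1,-1), and suppose A, B ∈ GL₄(ℂ) satisfy B = H A Λ where Λ = diag(ρ, ρ², ρ², ρ²), and suppose the first column of A equals a vector x with Δ = xᵀHx ≠ 0 and A⁻¹ satisfies (Hx)_μ = A⁻¹_{1μ}Δ. Then A B⁻¹ = ρ( H - (1-ρ) x xᵀ / Δ ). -/
open Matrix Complex

noncomputable def Hm : Matrix (Fin 4) (Fin 4) ℂ := Matrix.diagonal ![1, 1, 1, -1]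

noncomputable def ρ : ℂ := Complex.exp (2 * Real.pi * Complex.I / 3)

noncomputable def Λm : Matrix (Fin 4) (Fin 4) ℂ := Matrix.diagonal ![ρ, ρ ^ 2, ρ ^ 2, ρ ^ 2]

/-!
Write `e₀` for the first standard basis vector. The bilinear relations say `xᵀ H A = Δ e₀ᵀ`, and
`Λ = ρ² + (ρ - ρ²) e₀e₀ᵀ` with `A e₀e₀ᵀ = x e₀ᵀ`. Multiplying the claimed matrix by `B = H A Λ`
and using `H² = 1`, the rank-one corrections cancel and what remains is `ρ³ A = A`.
-/

lemma rho_pow_three : ρ ^ 3 = 1 := by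
  rw [ρ, ← Complex.exp_nat_mul]
  convert Complex.exp_two_pi_mul_I using 2
  push_cast
  ring

lemma Hm_mul_Hm : Hm * Hm = 1 := by
  rw [Hm, diagonal_mul_diagonal, ← diagonal_one]
  congr 1
  ext i
  fin_cases i <;> norm_num

lemma vecMul_Hm (x : Fin 4 → ℂ) : x ᵥ* Hm = Hm *ᵥ x := by
  rw [← vecMul_transpose, Hm, diagonal_transpose]

lemma Λm_eq : Λm = ρ ^ 2 • 1 + (ρ - ρ ^ 2) • vecMulVec (Pi.single 0 1) (Pi.single 0 1) := by
  rw [← single_eq_single_vecMulVec_single]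
  ext i j
  fin_cases i <;> fin_cases j <;> simp [Λm, one_apply]

lemma mul_Λm (A : Matrix (Fin 4) (Fin 4) ℂ) :
    A * Λm = ρ ^ 2 • A + (ρ - ρ ^ 2) • vecMulVec (A.col 0) (Pi.single 0 1) := by
  rw [Λm_eq, mul_add, Matrix.mul_smul, Matrix.mul_smul, mul_one, mul_vecMulVec, mulVec_single_one]

lemma single_one_vecMul_Λm : Pi.single 0 1 ᵥ* Λm = ρ • Pi.single 0 1 := by
  rw [Λm, single_vecMul_diagonal, one_mul, ← Pi.single_smul', smul_eq_mul, mul_one]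
  rfl

lemma vecMul_eq_smul_single_of_eq_smul_inv_row {K n : Type*} [CommRing K] [Fintype n]
    [DecidableEq n] {A : Matrix n n K} (hA : IsUnit A.det) {y : n → K} {i : n} {c : K}
    (hy : y = c • A⁻¹ i) :
    y ᵥ* A = c • Pi.single i 1 := by
  rw [hy, smul_vecMul, ← mul_apply_eq_vecMul, nonsing_inv_mul A hA]
  exact congrArg (c • ·) (funext fun _ => one_eq_pi_single)

theorem stmt1_general (A B : Matrix (Fin 4) (Fin 4) ℂ)
    (hA : IsUnit A.det) (hB : IsUnit B.det)
    (hBA : B = Hm * A * Λm)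
    (x : Fin 4 → ℂ) (hx : ∀ i, A i 0 = x i)
    (Δ : ℂ) (hΔ0 : Δ ≠ 0)
    (hinv : ∀ μ, Hm.mulVec x μ = A⁻¹ 0 μ * Δ) :
    A * B⁻¹ = ρ • (Hm - ((1 - ρ) / Δ) • Matrix.vecMulVec x x) := by
  have hcol : A.col 0 = x := funext hx
  have hrow : x ᵥ* (Hm * A) = Δ • Pi.single 0 1 := by
    rw [← vecMul_vecMul, vecMul_Hm]
    exact vecMul_eq_smul_single_of_eq_smul_inv_row hA
      (funext fun μ => (hinv μ).trans (mul_comm _ _))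
  suffices ρ • (Hm - ((1 - ρ) / Δ) • vecMulVec x x) * B = A by
    rw [← this, Matrix.mul_assoc, mul_nonsing_inv B hB, mul_one]
  calc ρ • (Hm - ((1 - ρ) / Δ) • vecMulVec x x) * B
      = ρ • (A * Λm) - (ρ * ((1 - ρ) / Δ)) • vecMulVec x (x ᵥ* (Hm * A) ᵥ* Λm) := by
        rw [hBA, smul_mul, sub_mul, smul_mul, vecMulVec_mul, ← Matrix.mul_assoc, ← Matrix.mul_assoc,
          Hm_mul_Hm, one_mul, vecMul_vecMul, Matrix.mul_assoc, smul_sub, smul_smul]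
    _ = ρ • (ρ ^ 2 • A + (ρ - ρ ^ 2) • vecMulVec x (Pi.single 0 1))
          - (ρ ^ 2 * (1 - ρ)) • vecMulVec x (Pi.single 0 1) := by
        rw [mul_Λm, hcol, hrow, smul_vecMul, single_one_vecMul_Λm, smul_smul, vecMulVec_smul,
          smul_smul]
        congr 2
        field_simp
    _ = ρ ^ 3 • A := by module
    _ = A := by rw [rho_pow_three, one_smul]

theorem stmt1 (A B : Matrix (Fin 4) (Fin 4) ℂ)
    (hA : IsUnit A.det) (hB : IsUnit B.det)
    (hBA : B = Hm * A * Λm)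
    (x : Fin 4 → ℂ) (hx : ∀ i, A i 0 = x i)
    (Δ : ℂ) (hΔ : Δ = x ⬝ᵥ Hm.mulVec x) (hΔ0 : Δ ≠ 0)
    (hinv : ∀ μ, Hm.mulVec x μ = A⁻¹ 0 μ * Δ) :
    A * B⁻¹ = ρ • (Hm - ((1 - ρ) / Δ) • Matrix.vecMulVec x x) :=
  stmt1_general A B hA hB hBA x hx Δ hΔ0 hinv
end

section
/- Let t = 1/2 + 5√3/18. Then t ∈ (0,1), t^{1/3} + (1-t)^{1/3} = 2^{1/3}, i.e. α = 1/2, β = t satisfy the degree-2 signature-3 modular relation (αβ)^{1/3} + ((1-α)(1-β))^{1/3} = 1 with α = 1/2. -/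
/-! With `s = √3` one has `((3 ± s)/6)^3 = (9 ± 5s)/36`, which are exactly `t/2` and `(1 - t)/2`.
So the two cube roots are `(3 ± √3)/6`, summing to `1`; pulling out the factor `2^{1/3}` gives the
relation for `t` and `1 - t`. -/

open Real

theorem pow_three_rpow_one_third {y : ℝ} (hy : 0 ≤ y) : (y ^ 3) ^ ((1:ℝ)/3) = y := by
  rw [one_div]
  exact_mod_cast pow_rpow_inv_natCast hy three_ne_zero

theorem mul_rpow_add_mul_rpow {c a b p : ℝ} (hc : 0 ≤ c) (ha : 0 ≤ a) (hb : 0 ≤ b) :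
    (c * a) ^ p + (c * b) ^ p = c ^ p * (a ^ p + b ^ p) := by
  rw [mul_rpow hc ha, mul_rpow hc hb, mul_add]

lemma three_add_sqrt_three_div_six_pow_three :
    ((3 + √3) / 6) ^ 3 = (9 + 5 * √3) / 36 := by
  have hs : √3 ^ 2 = 3 := sq_sqrt (by norm_num)
  linear_combination (√3 + 9) / 216 * hs

lemma three_sub_sqrt_three_div_six_pow_three :
    ((3 - √3) / 6) ^ 3 = (9 - 5 * √3) / 36 := by
  have hs : √3 ^ 2 = 3 := sq_sqrt (by norm_num)
  linear_combination (9 - √3) / 216 * hs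

lemma sqrt_three_lt_nine_fifths : √3 < 9 / 5 := by
  rw [sqrt_lt' (by norm_num)]
  norm_num

theorem stmt11 (t : ℝ) (ht : t = 1/2 + 5 * Real.sqrt 3 / 18) :
    t ∈ Set.Ioo (0:ℝ) 1 ∧
    t ^ ((1:ℝ)/3) + (1 - t) ^ ((1:ℝ)/3) = (2:ℝ) ^ ((1:ℝ)/3) ∧
    ((1/2) * t) ^ ((1:ℝ)/3) + ((1/2) * (1 - t)) ^ ((1:ℝ)/3) = 1 := by
  have hs₀ : 0 ≤ √3 := sqrt_nonneg 3
  have hs₁ := sqrt_three_lt_nine_fifths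
  have hmem : t ∈ Set.Ioo (0:ℝ) 1 := by constructor <;> linarith
  have hsum : ((1/2) * t) ^ ((1:ℝ)/3) + ((1/2) * (1 - t)) ^ ((1:ℝ)/3) = 1 := by
    have h_add : (1/2) * t = ((3 + √3) / 6) ^ 3 := by
      rw [three_add_sqrt_three_div_six_pow_three, ht]; ring
    have h_sub : (1/2) * (1 - t) = ((3 - √3) / 6) ^ 3 := by
      rw [three_sub_sqrt_three_div_six_pow_three, ht]; ring
    rw [h_add, h_sub, pow_three_rpow_one_third (by linarith), pow_three_rpow_one_third (by linarith)]
    ring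
  refine ⟨hmem, ?_, hsum⟩
  calc t ^ ((1:ℝ)/3) + (1 - t) ^ ((1:ℝ)/3)
      = (2 * ((1/2) * t)) ^ ((1:ℝ)/3) + (2 * ((1/2) * (1 - t))) ^ ((1:ℝ)/3) := by ring_nf
    _ = 2 ^ ((1:ℝ)/3) := by
      rw [mul_rpow_add_mul_rpow zero_le_two (by linarith [hmem.1]) (by linarith [hmem.2]), hsum,
        mul_one]
end

section
/- For 0 < z < 1, ₂F₁(1/2,1/2;1;z) = (1+√z)^{-1} · ₂F₁(1/2,1/2;1; 4√z/(1+√z)²). -/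
open Real

/-- Gauss hypergeometric function `₂F₁(a,b;c;z)` via the Euler integral
representation, valid for `c > b > 0` and `z < 1`. -/
noncomputable def hyp2F1 (a b c z : ℝ) : ℝ :=
  (Real.Gamma c / (Real.Gamma b * Real.Gamma (c - b))) *
    ∫ t in (0:ℝ)..1, t ^ (b - 1) * (1 - t) ^ (c - b - 1) * (1 - z * t) ^ (-a)

/-! For `c = 1`, `b = 1/2` the Euler integral is `π⁻¹ ∫₀¹ dt / √(t(1-t)(1-wt))`. With `k = √z`,
the Landen substitution `s = (1+k)²t/(1+kt)²` maps `(0,1)` increasingly onto itself, has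
`ds = (1+k)²(1-kt)/(1+kt)³ dt`, and turns `s(1-s)(1-4ks/(1+k)²)` into
`((1+k)(1-kt)/(1+kt)³)² · t(1-t)(1-k²t)`; hence the integral at `4k/(1+k)²` is `1+k` times the
integral at `k² = z`. -/

open MeasureTheory Set

noncomputable def ellipticKernel (w t : ℝ) : ℝ := (√(t * (1 - t) * (1 - w * t)))⁻¹

noncomputable def landenMap (k t : ℝ) : ℝ := (1 + k) ^ 2 * t / (1 + k * t) ^ 2

lemma hyp2F1_half_half_one {w : ℝ} (hw : w ≤ 1) :
    hyp2F1 (1/2) (1/2) 1 w = π⁻¹ * ∫ t in Ioo 0 1, ellipticKernel w t := by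
  have hGamma : Gamma 1 / (Gamma (1/2) * Gamma (1 - 1/2)) = π⁻¹ := by
    rw [show (1:ℝ) - 1/2 = 1/2 by norm_num, Gamma_one_half_eq, Gamma_one,
      mul_self_sqrt pi_pos.le, one_div]
  rw [hyp2F1, hGamma, intervalIntegral.integral_of_le zero_le_one,
    integral_Ioc_eq_integral_Ioo]
  congr 1
  refine setIntegral_congr_fun measurableSet_Ioo fun t ⟨ht0, ht1⟩ => ?_
  have hwt : 0 ≤ 1 - w * t := by nlinarith
  rw [ellipticKernel, sqrt_eq_rpow, ← rpow_neg_one, ← rpow_mul (by positivity),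
    mul_rpow (by positivity) hwt, mul_rpow ht0.le (by linarith)]
  norm_num

section Landen

variable {k : ℝ}

lemma abs_mul_lt_one_of_mem_Icc (hk : |k| < 1) {t : ℝ} (ht : t ∈ Icc (0:ℝ) 1) :
    |k * t| < 1 := by
  rw [abs_mul, abs_of_nonneg ht.1]
  nlinarith [abs_nonneg k, ht.2]

lemma hasDerivAt_landenMap {t : ℝ} (ht : 1 + k * t ≠ 0) :
    HasDerivAt (landenMap k) ((1 + k) ^ 2 * (1 - k * t) / (1 + k * t) ^ 3) t := by
  have hnum : HasDerivAt (fun t => (1 + k) ^ 2 * t) ((1 + k) ^ 2) t := by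
    simpa using (hasDerivAt_id t).const_mul ((1 + k) ^ 2)
  have hden : HasDerivAt (fun t => (1 + k * t) ^ 2) (2 * (1 + k * t) * k) t := by
    simpa [mul_comm] using (((hasDerivAt_id t).const_mul k).const_add 1).fun_pow 2
  refine (hnum.fun_div hden (pow_ne_zero 2 ht)).congr_deriv ?_
  field_simp
  ring

lemma continuousOn_landenMap (hk : |k| < 1) : ContinuousOn (landenMap k) (Icc 0 1) := by
  intro t ht
  have := abs_lt.1 (abs_mul_lt_one_of_mem_Icc hk ht)
  exact (hasDerivAt_landenMap (by linarith)).continuousAt.continuousWithinAt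

lemma strictMonoOn_landenMap (hk : |k| < 1) : StrictMonoOn (landenMap k) (Icc 0 1) := by
  refine strictMonoOn_of_deriv_pos (convex_Icc 0 1) (continuousOn_landenMap hk) fun t ht => ?_
  rw [interior_Icc] at ht
  have := abs_lt.1 (abs_mul_lt_one_of_mem_Icc hk (Ioo_subset_Icc_self ht))
  have hk' := abs_lt.1 hk
  rw [(hasDerivAt_landenMap (by linarith)).deriv]
  exact div_pos (mul_pos (by nlinarith) (by linarith)) (pow_pos (by linarith) 3)

lemma landenMap_image_Ioo (hk : |k| < 1) : landenMap k '' Ioo 0 1 = Ioo 0 1 := by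
  have h0 : landenMap k 0 = 0 := by simp [landenMap]
  have h1 : landenMap k 1 = 1 := by
    have : 1 + k ≠ 0 := by linarith [(abs_lt.1 hk).1]
    simp [landenMap, this]
  have hmono := strictMonoOn_landenMap hk
  refine Subset.antisymm ?_ ?_
  · rintro _ ⟨t, ⟨ht0, ht1⟩, rfl⟩
    constructor
    · simpa [h0] using hmono (left_mem_Icc.2 zero_le_one) ⟨ht0.le, ht1.le⟩ ht0
    · simpa [h1] using hmono ⟨ht0.le, ht1.le⟩ (right_mem_Icc.2 zero_le_one) ht1
  · simpa [h0, h1] using intermediate_value_Ioo zero_le_one (continuousOn_landenMap hk)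

lemma abs_deriv_mul_ellipticKernel_landenMap (hk : |k| < 1) {t : ℝ} (ht : t ∈ Ioo (0:ℝ) 1) :
    |(1 + k) ^ 2 * (1 - k * t) / (1 + k * t) ^ 3| *
        ellipticKernel (4 * k / (1 + k) ^ 2) (landenMap k t)
      = (1 + k) * ellipticKernel (k ^ 2) t := by
  have hkt := abs_lt.1 (abs_mul_lt_one_of_mem_Icc hk (Ioo_subset_Icc_self ht))
  have hk' := abs_lt.1 hk
  set c := (1 + k) * (1 - k * t) / (1 + k * t) ^ 3 with hc
  have hc0 : 0 < c := div_pos (mul_pos (by linarith) (by linarith)) (pow_pos (by linarith) 3)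
  have hfactor : landenMap k t * (1 - landenMap k t) * (1 - 4 * k / (1 + k) ^ 2 * landenMap k t)
      = c ^ 2 * (t * (1 - t) * (1 - k ^ 2 * t)) := by
    have : 1 + k ≠ 0 := by linarith
    have : 1 + k * t ≠ 0 := by linarith
    rw [hc, landenMap]
    field_simp
    ring
  have hderiv : (1 + k) ^ 2 * (1 - k * t) / (1 + k * t) ^ 3 = (1 + k) * c := by
    rw [hc]; ring
  rw [ellipticKernel, ellipticKernel, hfactor, sqrt_mul (sq_nonneg c), sqrt_sq hc0.le, hderiv,
    abs_of_pos (mul_pos (by linarith) hc0), mul_inv, ← mul_assoc, mul_assoc (1 + k),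
    mul_inv_cancel₀ hc0.ne', mul_one]

theorem integral_ellipticKernel_landen (hk : |k| < 1) :
    ∫ s in Ioo 0 1, ellipticKernel (4 * k / (1 + k) ^ 2) s
      = (1 + k) * ∫ t in Ioo 0 1, ellipticKernel (k ^ 2) t := by
  have hderiv : ∀ t ∈ Ioo (0:ℝ) 1, HasDerivWithinAt (landenMap k)
      ((1 + k) ^ 2 * (1 - k * t) / (1 + k * t) ^ 3) (Ioo 0 1) t := fun t ht => by
    have := abs_lt.1 (abs_mul_lt_one_of_mem_Icc hk (Ioo_subset_Icc_self ht))
    exact (hasDerivAt_landenMap (by linarith)).hasDerivWithinAt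
  have hinj : InjOn (landenMap k) (Ioo 0 1) :=
    (strictMonoOn_landenMap hk).injOn.mono Ioo_subset_Icc_self
  nth_rw 1 [← landenMap_image_Ioo hk]
  rw [integral_image_eq_integral_abs_deriv_smul measurableSet_Ioo hderiv hinj,
    ← integral_const_mul]
  exact setIntegral_congr_fun measurableSet_Ioo fun t ht =>
    abs_deriv_mul_ellipticKernel_landenMap hk ht

end Landen

theorem stmt14 (z : ℝ) (hz0 : 0 < z) (hz1 : z < 1) :
    hyp2F1 (1/2) (1/2) 1 z
      = (1 + Real.sqrt z)⁻¹ *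
        hyp2F1 (1/2) (1/2) 1 (4 * Real.sqrt z / (1 + Real.sqrt z)^2) := by
  set k := √z
  have hk : |k| < 1 := by
    rw [abs_of_nonneg (sqrt_nonneg z)]
    exact (sqrt_lt' one_pos).2 (by simpa using hz1)
  have hw : 4 * k / (1 + k) ^ 2 ≤ 1 := by
    rw [div_le_one (by positivity)]
    nlinarith [sq_nonneg (1 - k)]
  rw [hyp2F1_half_half_one hz1.le, hyp2F1_half_half_one hw, integral_ellipticKernel_landen hk,
    sq_sqrt hz0.le]
  have : 1 + k ≠ 0 := by positivity
  field_simp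
end

section
/- ₂F₁(1/2, 1/2; 1; (2-√3)/4) = Γ(1/6)Γ(1/3) / (3^{1/4}·2π^{3/2}). Equivalently, the complete elliptic integral K((√3-1)/(2√2)) = Γ(1/6)Γ(1/3)/(3^{1/4}·4√π). -/
open Real

open Set MeasureTheory

/-!
By the Euler integral, `π ₂F₁(1/2, 1/2; 1; z) = ∫₀¹ dt / √(t (1 - t) (1 - z t))`. For
`z = (2 - √3)/4` the affine change `u = c (1 - t)`, with `c = 2√3 - 3`, brings the cubic to
`w² = u (3 - 6u - u²)/4` at the cost of a factor `3^(1/4)`. The degree-two map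
`x = (3/u - u - 2)/4` is a 2-isogeny from this curve onto `y² = x³ - 1`: it pulls `dx/y` back to
`du/w` and maps `(0, c)` onto `(1, ∞)`. Finally `x = v^(-1/3)` turns `∫₁^∞ dx/√(x³ - 1)` into
`B(1/6, 1/2)/3`, and `Γ(1/3) Γ(2/3) = 2π/√3` gives the closed form.
-/

lemma integral_Ioo_rpow_mul_one_sub_rpow {u v : ℝ} (hu : 0 < u) (hv : 0 < v) :
    ∫ x in Ioo (0:ℝ) 1, x ^ (u - 1) * (1 - x) ^ (v - 1) = Gamma u * Gamma v / Gamma (u + v) := by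
  have hB := Complex.betaIntegral_eq_Gamma_mul_div u v (by simpa) (by simpa)
  rw [Complex.betaIntegral, intervalIntegral.integral_of_le zero_le_one,
    integral_Ioc_eq_integral_Ioo, ← Complex.ofReal_add, Complex.Gamma_ofReal, Complex.Gamma_ofReal,
    Complex.Gamma_ofReal] at hB
  apply Complex.ofReal_injective
  push_cast
  rw [← hB, ← integral_complex_ofReal]
  refine setIntegral_congr_fun measurableSet_Ioo fun x ⟨hx0, hx1⟩ => ?_
  push_cast
  rw [Complex.ofReal_cpow hx0.le, Complex.ofReal_cpow (sub_pos.2 hx1).le]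
  push_cast
  rfl

lemma integral_Ioi_one_rpow_sub_one_rpow_neg {p : ℝ} (hp : 0 < p) (a : ℝ) :
    ∫ x in Ioi (1:ℝ), (x ^ p - 1) ^ (-a)
      = p⁻¹ * ∫ v in Ioo (0:ℝ) 1, v ^ (a - p⁻¹ - 1) * (1 - v) ^ (-a) := by
  have hexp : -p⁻¹ < 0 := neg_neg_of_pos (inv_pos.2 hp)
  have hanti : StrictAntiOn (fun v : ℝ => v ^ (-p⁻¹)) (Ioi 0) :=
    fun _ hv _ _ hvw => rpow_lt_rpow_of_neg hv hvw hexp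
  have himage : (fun v : ℝ => v ^ (-p⁻¹)) '' Ioo 0 1 = Ioi 1 := by
    refine Subset.antisymm (image_subset_iff.2 fun v hv =>
      one_lt_rpow_of_pos_of_lt_one_of_neg hv.1 hv.2 hexp) fun y (hy : 1 < y) => ?_
    refine ⟨y ^ (-p), ⟨rpow_pos_of_pos (by linarith) _,
      rpow_lt_one_of_one_lt_of_neg hy (by linarith)⟩, ?_⟩
    show (y ^ (-p)) ^ (-p⁻¹) = y
    rw [← rpow_mul (by linarith), neg_mul_neg, mul_inv_cancel₀ hp.ne', rpow_one]
  rw [← himage, integral_image_eq_integral_abs_deriv_smul measurableSet_Ioo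
      (fun v hv => (hasDerivAt_rpow_const (Or.inl hv.1.ne')).hasDerivWithinAt)
      (hanti.injOn.mono Ioo_subset_Ioi_self), ← integral_const_mul]
  refine setIntegral_congr_fun measurableSet_Ioo fun v ⟨hv0, hv1⟩ => ?_
  have hpow : (v ^ (-p⁻¹)) ^ p - 1 = (1 - v) / v := by
    rw [← rpow_mul hv0.le, neg_mul, inv_mul_cancel₀ hp.ne', rpow_neg_one]
    field_simp
  rw [hpow, div_rpow (sub_pos.2 hv1).le hv0.le, smul_eq_mul, abs_mul, abs_neg, abs_inv,
    abs_of_pos hp, abs_of_pos (rpow_pos_of_pos hv0 _),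
    show a - p⁻¹ - 1 = (-p⁻¹ - 1) - (-a) by ring, rpow_sub hv0 (-p⁻¹ - 1) (-a)]
  ring

lemma integral_Ioi_one_rpow_sub_one_rpow_neg_eq_Gamma {p a : ℝ} (hp : 0 < p) (hpa : p⁻¹ < a)
    (ha : a < 1) :
    ∫ x in Ioi (1:ℝ), (x ^ p - 1) ^ (-a)
      = Gamma (a - p⁻¹) * Gamma (1 - a) / (p * Gamma (1 - p⁻¹)) := by
  rw [integral_Ioi_one_rpow_sub_one_rpow_neg hp, show -a = (1 - a) - 1 by ring,
    integral_Ioo_rpow_mul_one_sub_rpow (by linarith) (by linarith),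
    show a - p⁻¹ + (1 - a) = 1 - p⁻¹ by ring]
  field_simp

lemma Gamma_two_thirds : Gamma (2/3) = 2 * π / (√3 * Gamma (1/3)) := by
  have hreflect := Gamma_mul_Gamma_one_sub (1/3)
  rw [show (1:ℝ) - 1/3 = 2/3 by norm_num, mul_one_div, sin_pi_div_three] at hreflect
  have hG : 0 < Gamma (1/3) := Gamma_pos_of_pos (by norm_num)
  field_simp at hreflect ⊢
  linear_combination hreflect

lemma pi_rpow_three_halves : π ^ ((3:ℝ)/2) = π * √π := by
  rw [show (3:ℝ)/2 = 1 + 1/2 by norm_num, rpow_add pi_pos, rpow_one, sqrt_eq_rpow]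

lemma abs_mul_rpow_neg_half_sq_mul {d g : ℝ} (hd : d ≠ 0) (hg : 0 ≤ g) :
    |d| * (d ^ 2 * g) ^ (-(1/2) : ℝ) = g ^ (-(1/2) : ℝ) := by
  rw [mul_rpow (sq_nonneg d) hg, rpow_neg (sq_nonneg d), ← sqrt_eq_rpow, sqrt_sq_eq_abs,
    ← mul_assoc, mul_inv_cancel₀ (abs_ne_zero.2 hd), one_mul]

lemma hyp2F1_half_half_one_s15 {z : ℝ} (hz : z ≤ 1) :
    hyp2F1 (1/2) (1/2) 1 z
      = (∫ t in Ioo (0:ℝ) 1, (t * (1 - t) * (1 - z * t)) ^ (-(1/2) : ℝ)) / π := by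
  rw [hyp2F1, show (1 : ℝ) - 1/2 = 1/2 by norm_num, Gamma_one, Gamma_one_half_eq,
    mul_self_sqrt pi_pos.le, one_div_mul_eq_div, intervalIntegral.integral_of_le zero_le_one,
    integral_Ioc_eq_integral_Ioo]
  congr 1
  refine setIntegral_congr_fun measurableSet_Ioo fun t ⟨ht0, ht1⟩ => ?_
  have hzt : 0 ≤ 1 - z * t := by nlinarith
  rw [mul_rpow (by nlinarith) hzt, mul_rpow ht0.le (by linarith)]
  norm_num

noncomputable def isogenyX (u : ℝ) : ℝ := (3 / u - u - 2) / 4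

lemma hasDerivAt_isogenyX {u : ℝ} (hu : u ≠ 0) :
    HasDerivAt isogenyX (-(3 / u ^ 2 + 1) / 4) u := by
  have h : HasDerivAt (fun v : ℝ => (3 * v⁻¹ - v - 2) / 4) ((3 * -(u ^ 2)⁻¹ - 1) / 4) u :=
    ((((hasDerivAt_inv hu).const_mul 3).sub (hasDerivAt_id' u)).sub_const 2).div_const 4
  simp only [← div_eq_mul_inv] at h
  exact h.congr_deriv (by ring)

lemma isogenyX_pow_three_sub_one {u : ℝ} (hu : u ≠ 0) :
    isogenyX u ^ 3 - 1 = (-(3 / u ^ 2 + 1) / 4) ^ 2 * (u * (3 - 6 * u - u ^ 2) / 4) := by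
  unfold isogenyX
  field_simp
  ring

lemma strictAntiOn_isogenyX : StrictAntiOn isogenyX (Ioi 0) := by
  intro u (hu : 0 < u) v _ huv
  unfold isogenyX
  have : 3 / v < 3 / u := div_lt_div_of_pos_left (by norm_num) hu huv
  linarith

lemma isogenyX_two_mul_sqrt_three_sub_three : isogenyX (2 * √3 - 3) = 1 := by
  have hs : √3 ^ 2 = 3 := sq_sqrt (by norm_num)
  have hc : 2 * √3 - 3 ≠ 0 := by nlinarith
  unfold isogenyX
  field_simp
  linear_combination (-4) * hs

lemma isogenyX_image_Ioo : isogenyX '' Ioo 0 (2 * √3 - 3) = Ioi 1 := by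
  have hs : √3 ^ 2 = 3 := sq_sqrt (by norm_num)
  have hc : 0 < 2 * √3 - 3 := by nlinarith [sqrt_nonneg 3]
  rw [← isogenyX_two_mul_sqrt_three_sub_three]
  refine (image_subset_iff.2 fun u hu => strictAntiOn_isogenyX hu.1 hc hu.2).antisymm
    fun y hy => ?_
  -- `u` is the positive root of `u ^ 2 + 2 (1 + 2 y) u - 3`, i.e. of `isogenyX u = y`
  set u := √((1 + 2 * y) ^ 2 + 3) - (1 + 2 * y)
  have hroot := sq_sqrt (by positivity : (0:ℝ) ≤ (1 + 2 * y) ^ 2 + 3)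
  have hu0 : 0 < u := by
    nlinarith [sqrt_nonneg ((1 + 2 * y) ^ 2 + 3), (by positivity : (0:ℝ) ≤ (1 + 2 * y) ^ 2 + 3)]
  have hxu : isogenyX u = y := by
    unfold isogenyX
    field_simp
    linear_combination (-1) * hroot
  have huc : u < 2 * √3 - 3 :=
    (strictAntiOn_isogenyX.lt_iff_gt hc hu0).1 (by rwa [hxu])
  exact ⟨u, ⟨hu0, huc⟩, hxu⟩

lemma integral_Ioi_one_pow_three_sub_one_rpow :
    ∫ x in Ioi (1:ℝ), (x ^ 3 - 1) ^ (-(1/2) : ℝ)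
      = ∫ u in Ioo 0 (2 * √3 - 3), (u * (3 - 6 * u - u ^ 2) / 4) ^ (-(1/2) : ℝ) := by
  have hs : √3 ^ 2 = 3 := sq_sqrt (by norm_num)
  rw [← isogenyX_image_Ioo, integral_image_eq_integral_abs_deriv_smul measurableSet_Ioo
      (fun u hu => (hasDerivAt_isogenyX hu.1.ne').hasDerivWithinAt)
      (strictAntiOn_isogenyX.injOn.mono Ioo_subset_Ioi_self)]
  refine setIntegral_congr_fun measurableSet_Ioo fun u ⟨hu0, huc⟩ => ?_
  have hcubic : 0 ≤ u * (3 - 6 * u - u ^ 2) / 4 := by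
    have : 0 ≤ 3 - 6 * u - u ^ 2 := by nlinarith [sqrt_nonneg 3]
    positivity
  have hderiv : -(3 / u ^ 2 + 1) / 4 ≠ 0 := by
    have : 0 < 3 / u ^ 2 + 1 := by positivity
    linarith
  rw [smul_eq_mul, isogenyX_pow_three_sub_one hu0.ne', abs_mul_rpow_neg_half_sq_mul hderiv hcubic]

lemma integral_legendre_cubic_eq :
    ∫ t in Ioo (0:ℝ) 1, (t * (1 - t) * (1 - (2 - √3) / 4 * t)) ^ (-(1/2) : ℝ)
      = 3 ^ ((1:ℝ)/4) *
          ∫ u in Ioo 0 (2 * √3 - 3), (u * (3 - 6 * u - u ^ 2) / 4) ^ (-(1/2) : ℝ) := by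
  have hs : √3 ^ 2 = 3 := sq_sqrt (by norm_num)
  set c := 2 * √3 - 3
  have hc : 0 < c := by nlinarith [sqrt_nonneg 3]
  have himage : (fun t => c * (1 - t)) '' Ioo 0 1 = Ioo 0 c := by
    rw [← image_image (c * ·) (1 - ·), image_const_sub_Ioo, image_mul_left_Ioo hc]
    norm_num
  have hinj : InjOn (fun t => c * (1 - t)) (Ioo 0 1) := fun a _ b _ h => by
    simpa [hc.ne'] using h
  rw [← himage, integral_image_eq_integral_abs_deriv_smul measurableSet_Ioo
      (fun t _ => (((hasDerivAt_id' t).const_sub 1).const_mul c).hasDerivWithinAt) hinj,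
    ← integral_const_mul]
  refine setIntegral_congr_fun measurableSet_Ioo fun t ⟨ht0, ht1⟩ => ?_
  have hpoly : c * (1 - t) * (3 - 6 * (c * (1 - t)) - (c * (1 - t)) ^ 2) / 4
      = (c * -1) ^ 2 * (√3 * (t * (1 - t) * (1 - (2 - √3) / 4 * t))) := by
    -- `3 - 6u - u² = (c - u) (u + 2√3 + 3)`, and `c (2√3 + 3) = 3`
    linear_combination (-(1/4)) *
      ((4 * c + c ^ 2) * (1 - t) - 2 * c ^ 2 * (1 - t) ^ 2 + c ^ 2 * (1 - t) ^ 3) * hs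
  have hprod : 0 ≤ t * (1 - t) * (1 - (2 - √3) / 4 * t) := by
    have : 0 ≤ 1 - (2 - √3) / 4 * t := by nlinarith [sqrt_nonneg 3]
    have : 0 ≤ 1 - t := by linarith
    positivity
  have hsqrt3 : √3 ^ (-(1/2) : ℝ) = 3 ^ (-(1/4) : ℝ) := by
    rw [sqrt_eq_rpow, ← rpow_mul (by norm_num)]
    norm_num
  rw [smul_eq_mul, hpoly, abs_mul_rpow_neg_half_sq_mul (by simpa using hc.ne') (by positivity),
    mul_rpow (sqrt_nonneg 3) hprod, hsqrt3, ← mul_assoc, ← rpow_add (by norm_num)]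
  norm_num

lemma hyp2F1_half_half_one_two_sub_sqrt_three_div_four :
    hyp2F1 (1/2) (1/2) 1 ((2 - √3) / 4)
      = Gamma (1/6) * Gamma (1/3) / (3 ^ ((1:ℝ)/4) * 2 * π ^ ((3:ℝ)/2)) := by
  have hcube : ∫ x in Ioi (1:ℝ), (x ^ 3 - 1) ^ (-(1/2) : ℝ)
      = Gamma (1/6) * √π / (3 * Gamma (2/3)) := by
    have h := integral_Ioi_one_rpow_sub_one_rpow_neg_eq_Gamma (p := 3) (a := 1/2)
      (by norm_num) (by norm_num) (by norm_num)
    norm_num [Gamma_one_half_eq] at h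
    exact h
  have hquart : ((3:ℝ) ^ ((1:ℝ)/4)) ^ 2 = √3 := by
    rw [← rpow_natCast, ← rpow_mul (by norm_num), sqrt_eq_rpow]
    norm_num
  have hG : 0 < Gamma (1/3) := Gamma_pos_of_pos (by norm_num)
  rw [hyp2F1_half_half_one_s15 (by linarith [sqrt_nonneg 3]), integral_legendre_cubic_eq,
    ← integral_Ioi_one_pow_three_sub_one_rpow, hcube, pi_rpow_three_halves, Gamma_two_thirds]
  field_simp
  rw [hquart, sq_sqrt pi_pos.le]
  linear_combination π * mul_self_sqrt (by norm_num : (0:ℝ) ≤ 3)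

theorem stmt15 :
    hyp2F1 (1/2) (1/2) 1 ((2 - Real.sqrt 3) / 4)
      = Real.Gamma (1/6) * Real.Gamma (1/3)
          / ((3:ℝ) ^ ((1:ℝ)/4) * 2 * Real.pi ^ ((3:ℝ)/2)) ∧
    (Real.pi / 2) *
        hyp2F1 (1/2) (1/2) 1 (((Real.sqrt 3 - 1) / (2 * Real.sqrt 2))^2)
      = Real.Gamma (1/6) * Real.Gamma (1/3)
          / ((3:ℝ) ^ ((1:ℝ)/4) * 4 * Real.sqrt Real.pi) := by
  have hmodulus : ((√3 - 1) / (2 * √2)) ^ 2 = (2 - √3) / 4 := by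
    rw [div_pow, mul_pow, sq_sqrt zero_le_two]
    linear_combination (1/8) * sq_sqrt (zero_le_three : (0:ℝ) ≤ 3)
  refine ⟨hyp2F1_half_half_one_two_sub_sqrt_three_div_four, ?_⟩
  rw [hmodulus, hyp2F1_half_half_one_two_sub_sqrt_three_div_four, pi_rpow_three_halves]
  field_simp
  norm_num
end

section
/- Let H = {α₁, -1/ᾱ₁, α₂, -1/ᾱ₂, α₃, -1/ᾱ₃} ⊂ ℂ with all six points distinct and αᵢ ≠ 0, and let M be the Möbius transformation sending α₁ ↦ 0, α₂ ↦ 1, -1/ᾱ₁ ↦ ∞. Then Λ₁ := M(-1/ᾱ₂), Λ₂ := M(α₃), Λ₃ := M(-1/ᾱ₃) satisfy: Λ₁ is real and negative, and Λ₂·conj(Λ₃) = Λ₁. -/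
/-!
Write `σ z = -1 / z̄` for the antipodal map of the Riemann sphere and
`f z = (z - α₁) / (z - σ α₁)`, so that `M = f / f α₂`. A direct computation gives
`f (σ z) * conj (f z) = -|α₁|²` for every admissible `z`. Hence
`Λ₁ = f (σ α₂) / f α₂ = -|α₁|² / |f α₂|²`, and
`Λ₂ * conj Λ₃ = f α₃ * conj (f (σ α₃)) / |f α₂|²`
is the same number.
-/

open Complex

/-- The Möbius transformation sending `a ↦ 0`, `b ↦ 1`, `c ↦ ∞`. -/
noncomputable def mob (a b c z : ℂ) : ℂ := ((b - c) / (b - a)) * ((z - a) / (z - c))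

open ComplexConjugate

/-- Junk value: `antipode 0 = 0` rather than `∞`. -/
noncomputable def antipode (z : ℂ) : ℂ := -1 / conj z

lemma mob_eq_div_div (a b c z : ℂ) : mob a b c z = (z - a) / (z - c) / ((b - a) / (b - c)) := by
  rw [mob, div_eq_inv_mul _ ((b - a) / (b - c)), inv_div]

lemma sub_antipode {w : ℂ} (z : ℂ) (hw : w ≠ 0) :
    z - antipode w = (1 + conj w * z) / conj w := by
  have : conj w ≠ 0 := by simpa using hw
  rw [antipode]; field_simp; ring

lemma antipode_sub_antipode {z w : ℂ} (hz : z ≠ 0) (hw : w ≠ 0) :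
    antipode z - antipode w = (conj z - conj w) / (conj z * conj w) := by
  have : conj z ≠ 0 := by simpa using hz
  have : conj w ≠ 0 := by simpa using hw
  rw [antipode, antipode]; field_simp; ring

lemma div_sub_antipode_antipode_mul_conj {a z : ℂ} (ha : a ≠ 0) (hz : z ≠ 0) (hza : z ≠ a)
    (hz' : z ≠ antipode a) :
    (antipode z - a) / (antipode z - antipode a) * conj ((z - a) / (z - antipode a)) =
      -normSq a := by
  have hca : conj a ≠ 0 := by simpa using ha
  have hcz : conj z ≠ 0 := by simpa using hz
  have hcza : conj z - conj a ≠ 0 := sub_ne_zero.mpr ((RingHom.injective conj).ne hza)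
  have h1 : 1 + conj a * z ≠ 0 := by
    rw [← sub_ne_zero, sub_antipode z ha] at hz'
    exact (div_ne_zero_iff.mp hz').1
  have h1c : 1 + conj z * a ≠ 0 := by simpa [mul_comm] using (map_ne_zero conj).mpr h1
  rw [← neg_sub, sub_antipode a hz, antipode_sub_antipode hz ha, sub_antipode z ha, ← mul_conj]
  simp only [map_div₀, map_sub, map_add, map_mul, map_one, conj_conj]
  field_simp

lemma mob_antipode_antipode {a b : ℂ} (ha : a ≠ 0) (hb : b ≠ 0) (hba : b ≠ a)
    (hb' : b ≠ antipode a) :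
    mob a b (antipode a) (antipode b) =
      ((-normSq a / normSq ((b - a) / (b - antipode a)) : ℝ) : ℂ) := by
  have key := div_sub_antipode_antipode_mul_conj ha hb hba hb'
  set x := (b - a) / (b - antipode a)
  have hx : conj x ≠ 0 := right_ne_zero_of_mul (key ▸ neg_ne_zero.mpr (ofReal_ne_zero.mpr
    (normSq_pos.mpr ha).ne'))
  rw [mob_eq_div_div, ← mul_div_mul_right _ _ hx, key, mul_conj, ofReal_div, ofReal_neg]

lemma mob_mul_conj_mob_antipode {a w : ℂ} (b : ℂ) (ha : a ≠ 0) (hw : w ≠ 0) (hwa : w ≠ a)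
    (hw' : w ≠ antipode a) :
    mob a b (antipode a) w * conj (mob a b (antipode a) (antipode w)) =
      ((-normSq a / normSq ((b - a) / (b - antipode a)) : ℝ) : ℂ) := by
  have key := congrArg conj (div_sub_antipode_antipode_mul_conj ha hw hwa hw')
  rw [map_mul, conj_conj, map_neg, conj_ofReal] at key
  rw [mob_eq_div_div, mob_eq_div_div, map_div₀, div_mul_div_comm, mul_comm, key, mul_conj,
    ofReal_div, ofReal_neg]

theorem stmt19_general (α₁ α₂ α₃ : ℂ)
    (h₁ : α₁ ≠ 0) (h₂ : α₂ ≠ 0) (h₃ : α₃ ≠ 0)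
    (hdist : Function.Injective
      (![α₁, -1 / (starRingEnd ℂ α₁), α₂, -1 / (starRingEnd ℂ α₂),
         α₃, -1 / (starRingEnd ℂ α₃)] : Fin 6 → ℂ))
    (Λ₁ Λ₂ Λ₃ : ℂ)
    (hΛ₁ : Λ₁ = mob α₁ α₂ (-1 / starRingEnd ℂ α₁) (-1 / starRingEnd ℂ α₂))
    (hΛ₂ : Λ₂ = mob α₁ α₂ (-1 / starRingEnd ℂ α₁) α₃)
    (hΛ₃ : Λ₃ = mob α₁ α₂ (-1 / starRingEnd ℂ α₁) (-1 / starRingEnd ℂ α₃)) :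
    Λ₁.im = 0 ∧ Λ₁.re < 0 ∧ Λ₂ * starRingEnd ℂ Λ₃ = Λ₁ := by
  have h21 : α₂ ≠ α₁ := by simpa using hdist.ne (show (2 : Fin 6) ≠ 0 by decide)
  have h21' : α₂ ≠ antipode α₁ := by
    simpa [antipode] using hdist.ne (show (2 : Fin 6) ≠ 1 by decide)
  have h31 : α₃ ≠ α₁ := by simpa using hdist.ne (show (4 : Fin 6) ≠ 0 by decide)
  have h31' : α₃ ≠ antipode α₁ := by
    simpa [antipode] using hdist.ne (show (4 : Fin 6) ≠ 1 by decide)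
  have hΛ₁r := hΛ₁.trans (mob_antipode_antipode h₁ h₂ h21 h21')
  have hΛ₂₃ : Λ₂ * conj Λ₃ = Λ₁ :=
    hΛ₂ ▸ hΛ₃ ▸ hΛ₁r ▸ mob_mul_conj_mob_antipode α₂ h₁ h₃ h31 h31'
  have hneg : -normSq α₁ / normSq ((α₂ - α₁) / (α₂ - antipode α₁)) < 0 :=
    div_neg_of_neg_of_pos (neg_neg_of_pos (normSq_pos.mpr h₁))
      (normSq_pos.mpr (div_ne_zero (sub_ne_zero.mpr h21) (sub_ne_zero.mpr h21')))
  exact ⟨by rw [hΛ₁r, ofReal_im], by rwa [hΛ₁r, ofReal_re], hΛ₂₃⟩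

theorem stmt19 (α₁ α₂ α₃ : ℂ)
    (h₁ : α₁ ≠ 0) (h₂ : α₂ ≠ 0) (h₃ : α₃ ≠ 0)
    (hdist : Function.Injective
      (![α₁, -1 / (starRingEnd ℂ α₁), α₂, -1 / (starRingEnd ℂ α₂),
         α₃, -1 / (starRingEnd ℂ α₃)] : Fin 6 → ℂ))
    (hd1 : α₁ - α₂ ≠ 0) (hd2 : 1 + starRingEnd ℂ α₁ * α₃ ≠ 0)
    (Λ₁ Λ₂ Λ₃ : ℂ)
    (hΛ₁ : Λ₁ = mob α₁ α₂ (-1 / starRingEnd ℂ α₁) (-1 / starRingEnd ℂ α₂))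
    (hΛ₂ : Λ₂ = mob α₁ α₂ (-1 / starRingEnd ℂ α₁) α₃)
    (hΛ₃ : Λ₃ = mob α₁ α₂ (-1 / starRingEnd ℂ α₁) (-1 / starRingEnd ℂ α₃)) :
    Λ₁.im = 0 ∧ Λ₁.re < 0 ∧ Λ₂ * starRingEnd ℂ Λ₃ = Λ₁ :=
  stmt19_general α₁ α₂ α₃ h₁ h₂ h₃ hdist Λ₁ Λ₂ Λ₃ hΛ₁ hΛ₂ hΛ₃
end
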